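/- Let {p(u,v)} be a (β, d₁, d₂, p)-nice probability assignment on K_n with β ≤ 1/4 and p ≥ (log n)/√n, and let G be the corresponding inhomogeneous random graph where each edge {u,v} is open independently with probability p(u,v). Then there exists a constant D > 0 (independent of n) such that for all sufficiently large n, the probability that G contains a perfect matching (a matching covering all vertices except at most one) is at least 1 − exp(−D (log n)²). -/

import Mathlib

open MeasureTheory ProbabilityTheory Finset

/-!
Split the vertices into two halves `A`, `B` of size `m = ⌊n/2⌋`. By Hall's theorem `A` can be
matched into `B` unless some nonempty `S ⊆ A` and `T ⊆ B` with `|S| + |T| = m + 1` span no open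
edge. The larger of `S`, `T` has at least `⌈βn⌉` vertices, so by the first niceness condition each
vertex of the smaller one sends expected degree at least `d₁⌈βn⌉p ≥ d₁β√n log n` into it, and
independence bounds the probability of no `S`–`T` edge by `exp (-min(|S|,|T|) d₁⌈βn⌉p)`. This beats
the at most `m^(2 min(|S|,|T|))` choices of such a pair with room `exp (-(log n)²)` to spare.
-/

section Matching

variable {V : Type*}

def IsNearPerfectMatching (r : V → V → Prop) (M : Finset (V × V)) : Prop :=
  (∀ e ∈ M, e.1 ≠ e.2 ∧ r e.1 e.2) ∧
  (∀ e ∈ M, ∀ e' ∈ M, e ≠ e' → e.1 ≠ e'.1 ∧ e.1 ≠ e'.2 ∧ e.2 ≠ e'.1 ∧ e.2 ≠ e'.2) ∧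
  (∀ v w : V, (∀ e ∈ M, e.1 ≠ v ∧ e.2 ≠ v) → (∀ e ∈ M, e.1 ≠ w ∧ e.2 ≠ w) → v = w)

def HasCrossEdges (r : V → V → Prop) (A B : Finset V) : Prop :=
  ∀ S ⊆ A, ∀ T ⊆ B, S.Nonempty → #S + #T = #A + 1 → ∃ u ∈ S, ∃ w ∈ T, r u w

variable [DecidableEq V] {r : V → V → Prop} {A B : Finset V}

lemma HasCrossEdges.exists_injective (h : HasCrossEdges r A B) (hB : #B = #A) :
    ∃ f : A → V, Function.Injective f ∧ ∀ a, f a ∈ B ∧ r a (f a) := by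
  classical
  let N : A → Finset V := fun a => B.filter (r a)
  have hall : ∀ s : Finset A, #s ≤ #(s.biUnion N) := by
    intro s
    by_contra! hlt
    -- Hall's condition fails at `s`: then `s` has no edge into `B \ N(s)`, which is too large.
    have hNB : s.biUnion N ⊆ B := biUnion_subset.2 fun a _ => filter_subset _ _
    have hsA : #s ≤ #A := by simpa using card_le_univ s
    obtain ⟨T, hT, hTcard⟩ := exists_subset_card_eq (s := B \ s.biUnion N) (n := #A + 1 - #s)
      (by rw [card_sdiff_of_subset hNB]; omega)
    have hS : #(s.image Subtype.val) = #s := card_image_of_injective _ Subtype.val_injective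
    obtain ⟨u, hu, w, hw, huw⟩ := h (s.image Subtype.val) (image_subset_iff.2 fun a _ => a.2)
      T (hT.trans sdiff_subset) (by rw [← card_pos, hS]; omega) (by omega)
    obtain ⟨a, ha, rfl⟩ := mem_image.1 hu
    obtain ⟨hwB, hwN⟩ := mem_sdiff.1 (hT hw)
    exact hwN (mem_biUnion.2 ⟨a, ha, mem_filter.2 ⟨hwB, huw⟩⟩)
  obtain ⟨f, hf, hfN⟩ := (all_card_le_biUnion_card_iff_existsInjective' N).1 hall
  exact ⟨f, hf, fun a => mem_filter.1 (hfN a)⟩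

lemma exists_isNearPerfectMatching_of_injective [Fintype V] (hAB : Disjoint A B)
    (hB : #B = #A) (hV : Fintype.card V ≤ #A + #B + 1) (f : A → V)
    (hf : Function.Injective f) (hfB : ∀ a, f a ∈ B ∧ r a (f a)) :
    ∃ M, IsNearPerfectMatching r M := by
  have hne : ∀ a b : A, (a : V) ≠ f b := fun a b h =>
    disjoint_left.1 hAB a.2 (h ▸ (hfB b).1)
  have hsurj : univ.image f = B :=
    eq_of_subset_of_card_le (image_subset_iff.2 fun a _ => (hfB a).1)
      (by rw [card_image_of_injective _ hf, card_univ, Fintype.card_coe, hB])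
  refine ⟨univ.image fun a => (a.1, f a), ?_, ?_, ?_⟩
  · simp only [mem_image, mem_univ, true_and, forall_exists_index]
    rintro _ a rfl
    exact ⟨hne a a, (hfB a).2⟩
  · simp only [mem_image, mem_univ, true_and, forall_exists_index]
    rintro _ a rfl _ b rfl hab
    have hab' : a ≠ b := fun h => hab (h ▸ rfl)
    exact ⟨fun h => hab' (Subtype.val_injective h), hne a b, (hne b a).symm,
      hf.ne hab'⟩
  · have hout : ∀ x, (∀ e ∈ univ.image fun a => (a.1, f a), e.1 ≠ x ∧ e.2 ≠ x) →
        x ∈ (A ∪ B)ᶜ := by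
      intro x hx
      simp only [mem_image, mem_univ, true_and, forall_exists_index] at hx
      rw [mem_compl, mem_union, not_or, ← hsurj]
      refine ⟨fun hxA => (hx _ ⟨x, hxA⟩ rfl).1 rfl, fun hxB => ?_⟩
      obtain ⟨a, -, rfl⟩ := mem_image.1 hxB
      exact (hx _ a rfl).2 rfl
    have hcompl : #(A ∪ B)ᶜ ≤ 1 := by
      rw [card_compl, card_union_of_disjoint hAB]
      omega
    intro v w hv hw
    exact card_le_one.1 hcompl v (hout v hv) w (hout w hw)

lemma HasCrossEdges.exists_isNearPerfectMatching [Fintype V] (h : HasCrossEdges r A B)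
    (hAB : Disjoint A B) (hB : #B = #A) (hV : Fintype.card V ≤ #A + #B + 1) :
    ∃ M, IsNearPerfectMatching r M := by
  obtain ⟨f, hf, hfB⟩ := h.exists_injective hB
  exact exists_isNearPerfectMatching_of_injective hAB hB hV f hf hfB

end Matching

section Probability

variable {Ω : Type*} [MeasurableSpace Ω] {μ : Measure Ω} [IsProbabilityMeasure μ]

lemma one_sub_ofReal_le_ofReal_exp_neg (q : ℝ) :
    1 - ENNReal.ofReal q ≤ ENNReal.ofReal (Real.exp (-q)) := by
  rw [tsub_le_iff_right, ← ENNReal.ofReal_one]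
  calc ENNReal.ofReal 1 ≤ ENNReal.ofReal (Real.exp (-q) + q) :=
        ENNReal.ofReal_le_ofReal (by linarith [Real.add_one_le_exp (-q)])
    _ ≤ _ := ENNReal.ofReal_add_le

lemma measure_forall_eq_false_le_exp {ι κ : Type*} {X : ι → Ω → Bool}
    (hmeas : ∀ i, Measurable (X i)) (hind : iIndepFun X μ) {φ : κ → ι} {F : Finset κ}
    (hφ : Set.InjOn φ F) {q : κ → ℝ}
    (hq : ∀ j ∈ F, ENNReal.ofReal (q j) ≤ μ {ω | X (φ j) ω = true}) :
    μ {ω | ∀ j ∈ F, X (φ j) ω = false} ≤ ENNReal.ofReal (Real.exp (-∑ j ∈ F, q j)) := by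
  classical
  have hset : {ω | ∀ j ∈ F, X (φ j) ω = false} = ⋂ i ∈ F.image φ, X i ⁻¹' {false} := by
    ext; simp
  have hfactor : ∀ j ∈ F, μ (X (φ j) ⁻¹' {false}) ≤ ENNReal.ofReal (Real.exp (-q j)) := by
    intro j hj
    have hcompl : X (φ j) ⁻¹' {false} = {ω | X (φ j) ω = true}ᶜ := by ext; simp
    have htrue : MeasurableSet {ω | X (φ j) ω = true} := hmeas _ (measurableSet_singleton true)
    rw [hcompl, prob_compl_eq_one_sub htrue]
    exact (tsub_le_tsub_left (hq j hj) 1).trans (one_sub_ofReal_le_ofReal_exp_neg _)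
  calc μ {ω | ∀ j ∈ F, X (φ j) ω = false}
      = ∏ j ∈ F, μ (X (φ j) ⁻¹' {false}) := by
        rw [hset, hind.meas_biInter fun i _ => ⟨{false}, measurableSet_singleton _, rfl⟩,
          prod_image hφ]
    _ ≤ ∏ j ∈ F, ENNReal.ofReal (Real.exp (-q j)) := prod_le_prod' hfactor
    _ = ENNReal.ofReal (Real.exp (-∑ j ∈ F, q j)) := by
        rw [← ENNReal.ofReal_prod_of_nonneg fun j _ => (Real.exp_pos _).le, ← Real.exp_sum,
          sum_neg_distrib]

lemma measure_no_edge_between_le {V : Type*} [DecidableEq V] {X : Sym2 V → Ω → Bool}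
    (hmeas : ∀ e, Measurable (X e)) (hind : iIndepFun X μ) {pr : V → V → ℝ}
    (hprob : ∀ u v, ENNReal.ofReal (pr u v) ≤ μ {ω | X s(u, v) ω = true})
    {S T : Finset V} (hST : Disjoint S T) :
    μ {ω | ∀ u ∈ S, ∀ w ∈ T, X s(u, w) ω = false} ≤
      ENNReal.ofReal (Real.exp (-∑ u ∈ S, ∑ w ∈ T, pr u w)) := by
  have hinj : Set.InjOn (fun e : V × V => s(e.1, e.2)) ↑(S ×ˢ T) := by
    rintro ⟨u, w⟩ huw ⟨u', w'⟩ huw' h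
    rw [mem_coe, mem_product] at huw huw'
    rcases Sym2.eq_iff.1 h with ⟨rfl, rfl⟩ | ⟨rfl, rfl⟩
    · rfl
    · exact (disjoint_left.1 hST huw.1 huw'.2).elim
  rw [← sum_product']
  convert measure_forall_eq_false_le_exp (φ := fun e : V × V => s(e.1, e.2)) hmeas hind hinj
    fun e _ => hprob e.1 e.2 using 2
  ext
  simpa using ⟨fun h a b ha hb => h a ha b hb, fun h a ha b hb => h a b ha hb⟩

end Probability

section RowSums

variable {V : Type*}

def RowSumLowerBound (pr : V → V → ℝ) (r : ℕ) (Λ : ℝ) : Prop :=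
  ∀ u (T : Finset V), u ∉ T → r ≤ #T → Λ ≤ ∑ w ∈ T, pr u w

lemma rowSumLowerBound_of_nice [Fintype V] [DecidableEq V] {pr : V → V → ℝ}
    (hnn : ∀ u v, 0 ≤ pr u v) {t d q : ℝ}
    (hnice : ∀ (u v : V) (S₁ S₂ : Finset V), Disjoint S₁ S₂ →
      u ∉ S₁ → u ∉ S₂ → v ∉ S₁ → v ∉ S₂ → #S₁ = #S₂ →
      t ≤ #S₁ → d * #S₁ * q ≤ ∑ w ∈ S₁, pr u w)
    {r : ℕ} (ht : t ≤ r) (hr : 2 * r + 1 ≤ Fintype.card V) :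
    RowSumLowerBound pr r (d * r * q) := by
  intro u T hu hT
  obtain ⟨S₁, hS₁T, hS₁⟩ := exists_subset_card_eq hT
  have hu₁ : u ∉ S₁ := fun h => hu (hS₁T h)
  obtain ⟨S₂, hS₂, hS₂card⟩ := exists_subset_card_eq (s := (insert u S₁)ᶜ) (n := r)
    (by rw [card_compl, card_insert_of_notMem hu₁]; omega)
  have hdisj : Disjoint (insert u S₁) S₂ := disjoint_of_subset_right hS₂ disjoint_compl_right
  have hu₂ : u ∉ S₂ := disjoint_left.1 hdisj (mem_insert_self u S₁)
  have h := hnice u u S₁ S₂ (disjoint_of_subset_left (subset_insert u S₁) hdisj) hu₁ hu₂ hu₁ hu₂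
    (by rw [hS₁, hS₂card]) (by rwa [hS₁])
  rw [hS₁] at h
  exact h.trans (sum_le_sum_of_subset_of_nonneg hS₁T fun w _ _ => hnn u w)

variable {pr : V → V → ℝ} {r : ℕ} {Λ : ℝ}

lemma RowSumLowerBound.card_mul_le_sum_sum (h : RowSumLowerBound pr r Λ) {S T : Finset V}
    (hST : Disjoint S T) (hT : r ≤ #T) : #S * Λ ≤ ∑ u ∈ S, ∑ w ∈ T, pr u w := by
  rw [← nsmul_eq_mul]
  exact card_nsmul_le_sum _ _ _ fun u hu => h u T (disjoint_left.1 hST hu) hT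

lemma RowSumLowerBound.min_card_mul_le_sum_sum (h : RowSumLowerBound pr r Λ) (hΛ : 0 ≤ Λ)
    (hsymm : ∀ u v, pr u v = pr v u) {S T : Finset V} (hST : Disjoint S T)
    (hr : r ≤ #S ∨ r ≤ #T) :
    (min #S #T : ℕ) * Λ ≤ ∑ u ∈ S, ∑ w ∈ T, pr u w := by
  rcases hr with hS | hT
  · calc (min #S #T : ℕ) * Λ ≤ #T * Λ := by gcongr; exact min_le_right _ _
      _ ≤ ∑ w ∈ T, ∑ u ∈ S, pr w u := h.card_mul_le_sum_sum hST.symm hS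
      _ = ∑ u ∈ S, ∑ w ∈ T, pr u w := by rw [sum_comm]; simp only [hsymm]
  · calc (min #S #T : ℕ) * Λ ≤ #S * Λ := by gcongr; exact min_le_left _ _
      _ ≤ _ := h.card_mul_le_sum_sum hST hT

end RowSums

lemma choose_mul_choose_le_pow {m s : ℕ} (hs : 1 ≤ s) (hsm : s ≤ m) :
    m.choose s * m.choose (m + 1 - s) ≤ m ^ (2 * min s (m + 1 - s)) := by
  -- By symmetry of binomial coefficients, each factor is `m.choose j` with `j ≤ min s (m + 1 - s)`.
  rw [two_mul, pow_add]
  rcases le_total s (m + 1 - s) with h | h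
  · rw [min_eq_left h, show m + 1 - s = m - (s - 1) by omega, Nat.choose_symm (by omega)]
    exact Nat.mul_le_mul (Nat.choose_le_pow m s)
      ((Nat.choose_le_pow m _).trans (Nat.pow_le_pow_right (by omega) (by omega)))
  · rw [min_eq_right h, ← Nat.choose_symm hsm]
    exact Nat.mul_le_mul
      ((Nat.choose_le_pow m _).trans (Nat.pow_le_pow_right (by omega) (by omega)))
      (Nat.choose_le_pow m _)

lemma pow_mul_exp_le {m k : ℕ} (hm : 1 ≤ m) (hk : 1 ≤ k) {Λ L : ℝ} (hL : 0 ≤ L)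
    (hΛ : 3 * Real.log m + L ≤ Λ) :
    (m : ℝ) ^ (2 * k) * Real.exp (-k * Λ) ≤ Real.exp (-(Real.log m + L)) := by
  have hlog : 0 ≤ Real.log m := Real.log_nonneg (by exact_mod_cast hm)
  have hkR : (1 : ℝ) ≤ k := by exact_mod_cast hk
  have hpow : (m : ℝ) ^ (2 * k) = Real.exp ((2 * k : ℕ) * Real.log m) := by
    rw [Real.exp_nat_mul, Real.exp_log (by positivity)]
  rw [hpow, ← Real.exp_add, Real.exp_le_exp]
  push_cast
  nlinarith

lemma sum_choose_mul_choose_mul_exp_le {m : ℕ} (hm : 1 ≤ m) {Λ L : ℝ} (hL : 0 ≤ L)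
    (hΛ : 3 * Real.log m + L ≤ Λ) :
    ∑ s ∈ Icc 1 m, (m.choose s : ℝ) * m.choose (m + 1 - s) *
      Real.exp (-(min s (m + 1 - s) : ℕ) * Λ) ≤ Real.exp (-L) := by
  have hterm : ∀ s ∈ Icc 1 m, (m.choose s : ℝ) * m.choose (m + 1 - s) *
      Real.exp (-(min s (m + 1 - s) : ℕ) * Λ) ≤ Real.exp (-(Real.log m + L)) := by
    intro s hs
    obtain ⟨hs1, hsm⟩ := mem_Icc.1 hs
    refine le_trans ?_ (pow_mul_exp_le hm (k := min s (m + 1 - s)) (by omega) hL hΛ)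
    gcongr
    exact_mod_cast choose_mul_choose_le_pow hs1 hsm
  calc _ ≤ ∑ s ∈ Icc 1 m, Real.exp (-(Real.log m + L)) := sum_le_sum hterm
    _ = Real.exp (Real.log m) * Real.exp (-(Real.log m + L)) := by
        rw [sum_const, Nat.card_Icc, Real.exp_log (by positivity), nsmul_eq_mul]
        norm_num
    _ = Real.exp (-L) := by rw [← Real.exp_add]; ring_nf

section RandomGraph

variable {Ω V : Type*} [MeasurableSpace Ω] {μ : Measure Ω} [IsProbabilityMeasure μ]
  [DecidableEq V] {X : Sym2 V → Ω → Bool} {pr : V → V → ℝ} {r m : ℕ} {Λ L : ℝ}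

lemma measure_no_edge_between_le_exp_min_card (hmeas : ∀ e, Measurable (X e))
    (hind : iIndepFun X μ) (hprob : ∀ u v, ENNReal.ofReal (pr u v) ≤ μ {ω | X s(u, v) ω = true})
    (hsymm : ∀ u v, pr u v = pr v u) (hrow : RowSumLowerBound pr r Λ) (hΛ : 0 ≤ Λ)
    {S T : Finset V} (hST : Disjoint S T) (hr : r ≤ #S ∨ r ≤ #T) :
    μ {ω | ∀ u ∈ S, ∀ w ∈ T, X s(u, w) ω = false} ≤
      ENNReal.ofReal (Real.exp (-(min #S #T : ℕ) * Λ)) := by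
  refine (measure_no_edge_between_le hmeas hind hprob hST).trans
    (ENNReal.ofReal_le_ofReal (Real.exp_le_exp.2 ?_))
  linarith [hrow.min_card_mul_le_sum_sum hΛ hsymm hST hr]

lemma measure_not_hasCrossEdges_le (hmeas : ∀ e, Measurable (X e)) (hind : iIndepFun X μ)
    (hprob : ∀ u v, ENNReal.ofReal (pr u v) ≤ μ {ω | X s(u, v) ω = true})
    (hsymm : ∀ u v, pr u v = pr v u) (hrow : RowSumLowerBound pr r Λ)
    {A B : Finset V} (hAB : Disjoint A B) (hA : #A = m) (hB : #B = m) (hm : 1 ≤ m)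
    (hr : 2 * r ≤ m + 2) (hL : 0 ≤ L) (hΛ : 3 * Real.log m + L ≤ Λ) :
    μ {ω | ¬ HasCrossEdges (fun u v => X s(u, v) ω = true) A B} ≤
      ENNReal.ofReal (Real.exp (-L)) := by
  let pairs : ℕ → Finset (Finset V × Finset V) := fun s =>
    A.powersetCard s ×ˢ B.powersetCard (m + 1 - s)
  let noEdge : Finset V × Finset V → Set Ω := fun P =>
    {ω | ∀ u ∈ P.1, ∀ w ∈ P.2, X s(u, w) ω = false}
  have hcover : {ω | ¬ HasCrossEdges (fun u v => X s(u, v) ω = true) A B} ⊆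
      ⋃ s ∈ Icc 1 m, ⋃ P ∈ pairs s, noEdge P := by
    intro ω hω
    simp only [HasCrossEdges, Set.mem_ofPred_eq, not_forall, not_exists, not_and,
      Bool.not_eq_true] at hω
    obtain ⟨S, hS, T, hT, hne, hcard, hnone⟩ := hω
    have hSm : #S ≤ m := hA ▸ card_le_card hS
    simp only [Set.mem_iUnion, mem_Icc, exists_prop]
    have hTcard : #T = m + 1 - #S := by omega
    exact ⟨#S, ⟨hne.card_pos, hSm⟩, (S, T),
      mem_product.2 ⟨mem_powersetCard.2 ⟨hS, rfl⟩, mem_powersetCard.2 ⟨hT, hTcard⟩⟩, hnone⟩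
  have hpair : ∀ s ∈ Icc 1 m, ∀ P ∈ pairs s,
      μ (noEdge P) ≤ ENNReal.ofReal (Real.exp (-(min s (m + 1 - s) : ℕ) * Λ)) := by
    intro s hs P hP
    obtain ⟨⟨hP₁, hcard₁⟩, ⟨hP₂, hcard₂⟩⟩ :=
      (mem_product.1 hP).imp mem_powersetCard.1 mem_powersetCard.1
    have hΛ0 : 0 ≤ Λ := by
      linarith [Real.log_nonneg (show (1 : ℝ) ≤ m by exact_mod_cast hm)]
    rw [← hcard₂, ← hcard₁]
    exact measure_no_edge_between_le_exp_min_card hmeas hind hprob hsymm hrow hΛ0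
      (disjoint_of_subset_left hP₁ (disjoint_of_subset_right hP₂ hAB))
      (by rw [mem_Icc] at hs; omega)
  calc μ {ω | ¬ HasCrossEdges (fun u v => X s(u, v) ω = true) A B}
      ≤ ∑ s ∈ Icc 1 m, ∑ P ∈ pairs s, μ (noEdge P) :=
        (measure_mono hcover).trans <| (measure_biUnion_finset_le _ _).trans <|
          sum_le_sum fun s _ => measure_biUnion_finset_le _ _
    _ ≤ ∑ s ∈ Icc 1 m, ∑ _P ∈ pairs s,
          ENNReal.ofReal (Real.exp (-(min s (m + 1 - s) : ℕ) * Λ)) :=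
        sum_le_sum fun s hs => sum_le_sum fun P hP => hpair s hs P hP
    _ = ENNReal.ofReal (∑ s ∈ Icc 1 m, (m.choose s : ℝ) * m.choose (m + 1 - s) *
          Real.exp (-(min s (m + 1 - s) : ℕ) * Λ)) := by
        rw [ENNReal.ofReal_sum_of_nonneg fun s _ => by positivity]
        refine sum_congr rfl fun s _ => ?_
        rw [sum_const, card_product, card_powersetCard, card_powersetCard, hA, hB,
          nsmul_eq_mul, ENNReal.ofReal_mul (by positivity), ENNReal.ofReal_mul (by positivity)]
        simp
    _ ≤ ENNReal.ofReal (Real.exp (-L)) :=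
        ENNReal.ofReal_le_ofReal (sum_choose_mul_choose_mul_exp_le hm hL hΛ)

lemma measure_exists_isNearPerfectMatching_ge [Fintype V] (hmeas : ∀ e, Measurable (X e))
    (hind : iIndepFun X μ)
    (hprob : ∀ u v, ENNReal.ofReal (pr u v) ≤ μ {ω | X s(u, v) ω = true})
    (hsymm : ∀ u v, pr u v = pr v u) (hrow : RowSumLowerBound pr r Λ)
    (hm : 1 ≤ m) (hmV : 2 * m ≤ Fintype.card V) (hVm : Fintype.card V ≤ 2 * m + 1)
    (hr : 2 * r ≤ m + 2) (hL : 0 ≤ L) (hΛ : 3 * Real.log m + L ≤ Λ) :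
    ENNReal.ofReal (1 - Real.exp (-L)) ≤
      μ {ω | ∃ M, IsNearPerfectMatching (fun u v => X s(u, v) ω = true) M} := by
  obtain ⟨A, -, hA⟩ := exists_subset_card_eq (s := (univ : Finset V)) (n := m)
    (by rw [card_univ]; omega)
  obtain ⟨B, hBA, hB⟩ := exists_subset_card_eq (s := Aᶜ) (n := m)
    (by rw [card_compl]; omega)
  have hAB : Disjoint A B := disjoint_of_subset_right hBA disjoint_compl_right
  let good := {ω | HasCrossEdges (fun u v => X s(u, v) ω = true) A B}
  have hgood : good ⊆ {ω | ∃ M, IsNearPerfectMatching (fun u v => X s(u, v) ω = true) M} :=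
    fun ω hω => hω.exists_isNearPerfectMatching hAB (hB.trans hA.symm) (by omega)
  have hbad : μ goodᶜ ≤ ENNReal.ofReal (Real.exp (-L)) :=
    measure_not_hasCrossEdges_le hmeas hind hprob hsymm hrow hAB hA hB hm hr hL hΛ
  calc ENNReal.ofReal (1 - Real.exp (-L)) = 1 - ENNReal.ofReal (Real.exp (-L)) := by
        rw [ENNReal.ofReal_sub _ (Real.exp_pos _).le, ENNReal.ofReal_one]
    _ ≤ 1 - μ goodᶜ := tsub_le_tsub_left hbad 1
    _ ≤ μ good := tsub_le_iff_right.2 (measure_univ (μ := μ) ▸ measure_univ_le_add_compl good)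
    _ ≤ _ := measure_mono hgood

end RandomGraph

lemma eventually_add_log_le_mul_sqrt (a : ℝ) {c : ℝ} (hc : 0 < c) :
    ∀ᶠ x : ℝ in Filter.atTop, a + Real.log x ≤ c * √x := by
  have h : (fun x => a + Real.log x) =o[Filter.atTop] Real.sqrt := by
    refine (Asymptotics.isLittleO_const_left.2 (Or.inr ?_)).add ?_
    · exact tendsto_norm_atTop_atTop.comp Real.tendsto_sqrt_atTop
    · simpa only [← Real.sqrt_eq_rpow] using
        isLittleO_log_rpow_atTop (by norm_num : (0 : ℝ) < 1 / 2)
  filter_upwards [h.bound hc] with x hx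
  rw [Real.norm_of_nonneg (Real.sqrt_nonneg x)] at hx
  exact (le_abs_self _).trans hx

lemma ceil_mul_le_of_le_quarter {β : ℝ} (hβ : β ≤ 1 / 4) (n : ℕ) : ⌈β * n⌉₊ ≤ (n + 3) / 4 := by
  apply Nat.ceil_le.2
  have : (n : ℝ) ≤ 4 * ((n + 3) / 4 : ℕ) := by exact_mod_cast (by omega : n ≤ 4 * ((n + 3) / 4))
  nlinarith [n.cast_nonneg (α := ℝ)]

lemma three_mul_log_add_log_sq_le {n m r : ℕ} {β d q : ℝ} (hm : 1 ≤ m) (hmn : m ≤ n)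
    (hd : 0 ≤ d) (hr : β * n ≤ r) (hq : Real.log n / √n ≤ q)
    (hkey : 3 + Real.log n ≤ d * β * √n) :
    3 * Real.log m + Real.log n ^ 2 ≤ d * r * q := by
  have hn : (0 : ℝ) < n := by exact_mod_cast (by omega : 0 < n)
  have hlogn : 0 ≤ Real.log n := Real.log_nonneg (by exact_mod_cast (by omega : 1 ≤ n))
  have hlogm : Real.log m ≤ Real.log n :=
    Real.log_le_log (by exact_mod_cast hm) (by exact_mod_cast hmn)
  have hratio : 0 ≤ Real.log n / √n := div_nonneg hlogn (Real.sqrt_nonneg _)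
  calc 3 * Real.log m + Real.log n ^ 2 ≤ (3 + Real.log n) * Real.log n := by nlinarith
    _ ≤ d * β * √n * Real.log n := mul_le_mul_of_nonneg_right hkey hlogn
    _ = d * (β * n) * (Real.log n / √n) := by
        field_simp
        rw [Real.sq_sqrt hn.le]
        ring
    _ ≤ d * r * q := by gcongr

theorem stmt10_general (β d₁ d₂ : ℝ) (hβ0 : 0 < β) (hβ : β ≤ 1 / 4)
    (hd₁ : 0 < d₁) (p : ℕ → ℝ)
    (hplog : ∀ n : ℕ, Real.log n / Real.sqrt n ≤ p n) :
    ∃ D > (0 : ℝ), ∃ N : ℕ, ∀ n ≥ N,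
      ∀ (Ω : Type) (_ : MeasurableSpace Ω) (μ : Measure Ω)
        (_ : IsProbabilityMeasure μ)
        (pr : Fin n → Fin n → ℝ) (X : Sym2 (Fin n) → Ω → Bool),
        (∀ u v, pr u v = pr v u) →
        (∀ u v, 0 ≤ pr u v) → (∀ u v, pr u v ≤ 1) →
        (∀ e, Measurable (X e)) →
        iIndepFun X μ →
        (∀ u v : Fin n, μ {ω | X s(u, v) ω = true} = ENNReal.ofReal (pr u v)) →
        -- first niceness condition
        (∀ (u v : Fin n) (S₁ S₂ : Finset (Fin n)), Disjoint S₁ S₂ →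
          u ∉ S₁ → u ∉ S₂ → v ∉ S₁ → v ∉ S₂ → S₁.card = S₂.card →
          β * n ≤ S₁.card → d₁ * S₁.card * p n ≤ ∑ w ∈ S₁, pr u w) →
        -- second niceness condition
        (∀ (u v : Fin n) (S₁ S₂ : Finset (Fin n)), Disjoint S₁ S₂ →
          u ∉ S₁ → u ∉ S₂ → v ∉ S₁ → v ∉ S₂ → S₁.card = S₂.card →
          β * n ≤ S₁.card →
          d₂ * S₁.card * p n ^ 2 ≤ ∑ w₁ ∈ S₁, ∑ w₂ ∈ S₂, pr u w₁ * pr w₂ v) →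
        ENNReal.ofReal (1 - Real.exp (-D * Real.log n ^ 2)) ≤
          μ {ω | ∃ M : Finset (Fin n × Fin n),
            (∀ e ∈ M, e.1 ≠ e.2 ∧ X s(e.1, e.2) ω = true) ∧
            (∀ e ∈ M, ∀ e' ∈ M, e ≠ e' →
              e.1 ≠ e'.1 ∧ e.1 ≠ e'.2 ∧ e.2 ≠ e'.1 ∧ e.2 ≠ e'.2) ∧
            (∀ v w : Fin n, (∀ e ∈ M, e.1 ≠ v ∧ e.2 ≠ v) →
              (∀ e ∈ M, e.1 ≠ w ∧ e.2 ≠ w) → v = w)} := by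
  obtain ⟨N, hN⟩ := Filter.eventually_atTop.1 ((Filter.eventually_ge_atTop 3).and
    (tendsto_natCast_atTop_atTop.eventually
      (eventually_add_log_le_mul_sqrt 3 (mul_pos hd₁ hβ0))))
  refine ⟨1, one_pos, N, fun n hn Ω _ μ _ pr X hsymm hnn _ hmeas hind hprob hnice _ => ?_⟩
  obtain ⟨hn3, hkey⟩ := hN n hn
  have hr := ceil_mul_le_of_le_quarter hβ n
  have hrow : RowSumLowerBound pr ⌈β * n⌉₊ (d₁ * ⌈β * n⌉₊ * p n) :=
    rowSumLowerBound_of_nice hnn hnice (Nat.le_ceil _) (by rw [Fintype.card_fin]; omega)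
  rw [neg_one_mul]
  exact measure_exists_isNearPerfectMatching_ge (m := n / 2) hmeas hind
    (fun u v => (hprob u v).ge) hsymm hrow (by omega) (by rw [Fintype.card_fin]; omega)
    (by rw [Fintype.card_fin]; omega) (by omega) (sq_nonneg _)
    (three_mul_log_add_log_sq_le (by omega) (Nat.div_le_self n 2) hd₁.le (Nat.le_ceil _)
      (hplog n) hkey)

/-- For a `(β, d₁, d₂, p)`-nice probability assignment with `β ≤ 1/4` and
`p ≥ log n / √n`, the inhomogeneous random graph contains a matching covering
all vertices except at most one, with probability at least
`1 - exp (-D (log n)²)` for some constant `D > 0` and all `n` large. -/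
theorem stmt10 (β d₁ d₂ : ℝ) (hβ0 : 0 < β) (hβ : β ≤ 1 / 4)
    (hd₁ : 0 < d₁) (hd₂ : 0 < d₂) (p : ℕ → ℝ)
    (hp0 : ∀ n, 0 < p n) (hp1 : ∀ n, p n < 1)
    (hplog : ∀ n : ℕ, Real.log n / Real.sqrt n ≤ p n) :
    ∃ D > (0 : ℝ), ∃ N : ℕ, ∀ n ≥ N,
      ∀ (Ω : Type) (_ : MeasurableSpace Ω) (μ : Measure Ω)
        (_ : IsProbabilityMeasure μ)
        (pr : Fin n → Fin n → ℝ) (X : Sym2 (Fin n) → Ω → Bool),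
        (∀ u v, pr u v = pr v u) →
        (∀ u v, 0 ≤ pr u v) → (∀ u v, pr u v ≤ 1) →
        (∀ e, Measurable (X e)) →
        iIndepFun X μ →
        (∀ u v : Fin n, μ {ω | X s(u, v) ω = true} = ENNReal.ofReal (pr u v)) →
        -- first niceness condition
        (∀ (u v : Fin n) (S₁ S₂ : Finset (Fin n)), Disjoint S₁ S₂ →
          u ∉ S₁ → u ∉ S₂ → v ∉ S₁ → v ∉ S₂ → S₁.card = S₂.card →
          β * n ≤ S₁.card → d₁ * S₁.card * p n ≤ ∑ w ∈ S₁, pr u w) →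
        -- second niceness condition
        (∀ (u v : Fin n) (S₁ S₂ : Finset (Fin n)), Disjoint S₁ S₂ →
          u ∉ S₁ → u ∉ S₂ → v ∉ S₁ → v ∉ S₂ → S₁.card = S₂.card →
          β * n ≤ S₁.card →
          d₂ * S₁.card * p n ^ 2 ≤ ∑ w₁ ∈ S₁, ∑ w₂ ∈ S₂, pr u w₁ * pr w₂ v) →
        ENNReal.ofReal (1 - Real.exp (-D * Real.log n ^ 2)) ≤
          μ {ω | ∃ M : Finset (Fin n × Fin n),
            (∀ e ∈ M, e.1 ≠ e.2 ∧ X s(e.1, e.2) ω = true) ∧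
            (∀ e ∈ M, ∀ e' ∈ M, e ≠ e' →
              e.1 ≠ e'.1 ∧ e.1 ≠ e'.2 ∧ e.2 ≠ e'.1 ∧ e.2 ≠ e'.2) ∧
            (∀ v w : Fin n, (∀ e ∈ M, e.1 ≠ v ∧ e.2 ≠ v) →
              (∀ e ∈ M, e.1 ≠ w ∧ e.2 ≠ w) → v = w)} :=
  stmt10_general β d₁ d₂ hβ0 hβ hd₁ p hplog
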